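/- arXiv:1808.09659 — 2 statements merged into one kernel-verified Lean document; each statement's English description precedes it below -/
import Mathlib

section
/- Let 1 < p < 2 with 1/p + 1/p′ = 1, and let z ∈ ℂ. Then φ_z ∈ L^{p′,∞}(𝔛), i.e. sup_{t>0} t·(#{x ∈ 𝔛 : |φ_z(x)| > t})^{1/p′} < ∞, if and only if z ∈ S_p, i.e. if and only if |Im z| ≤ 1/p − 1/2. -/
open Complex MeasureTheory ENNReal Filter

noncomputable section

/-- A homogeneous tree of degree `q + 1`: a connected acyclic graph in which every
vertex has exactly `q + 1` neighbours, together with a fixed reference vertex `o`. -/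
structure HomTree (q : ℕ) where
  X : Type
  G : SimpleGraph X
  connected : G.Connected
  acyclic : G.IsAcyclic
  regular : ∀ x : X, (G.neighborSet x).ncard = q + 1
  o : X

namespace HomTree

/-- `τ = 2π / log q`. -/
def tau (q : ℕ) : ℝ := 2 * Real.pi / Real.log q

/-- The meromorphic `c`-function. -/
def cfun (q : ℕ) (z : ℂ) : ℂ :=
  ((q : ℂ) ^ ((1 : ℂ) / 2) / ((q : ℂ) + 1)) *
    (((q : ℂ) ^ ((1 : ℂ) / 2 + I * z) - (q : ℂ) ^ (-(1 : ℂ) / 2 - I * z)) /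
      ((q : ℂ) ^ (I * z) - (q : ℂ) ^ (-(I * z))))

/-- The coefficients `B′(n,m,s)`. -/
def Bp (q : ℕ) (s : ℝ) (n m : ℕ) : ℂ :=
  if n = 0 then
    (q : ℂ) ^ (-(I * (s : ℂ) * (m : ℂ))) +
      cfun q (s : ℂ) * ((q : ℂ) ^ (I * (s : ℂ) * (m : ℂ)) - (q : ℂ) ^ (-(I * (s : ℂ) * (m : ℂ))))
  else
    cfun q (s : ℂ) * (q : ℂ) ^ (I * (s : ℂ) * ((n : ℂ) - 1)) *
      ((q : ℂ) ^ (I * (s : ℂ) * ((m : ℂ) - (n : ℂ) + 1)) -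
        (q : ℂ) ^ (-(I * (s : ℂ) * ((m : ℂ) - (n : ℂ) + 1))))

variable {q : ℕ} (T : HomTree q)

/-- Counting measurable structure on the vertices. -/
instance : MeasurableSpace T.X := ⊤

/-- `|x| = d(o, x)`. -/
def nrm (x : T.X) : ℕ := T.G.dist T.o x

open Classical in
/-- The elementary spherical function `φ_z`. -/
def sph (z : ℂ) (x : T.X) : ℂ :=
  if ∃ k : ℤ, z = (k : ℂ) * (tau q : ℂ) then
    ((((q : ℂ) - 1) / ((q : ℂ) + 1)) * (T.nrm x : ℂ) + 1) * (q : ℂ) ^ (-(T.nrm x : ℂ) / 2)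
  else if ∃ k : ℤ, z = (tau q : ℂ) / 2 + (k : ℂ) * (tau q : ℂ) then
    (-1) ^ (T.nrm x) * ((((q : ℂ) - 1) / ((q : ℂ) + 1)) * (T.nrm x : ℂ) + 1) *
      (q : ℂ) ^ (-(T.nrm x : ℂ) / 2)
  else
    cfun q z * (q : ℂ) ^ ((I * z - 1 / 2) * (T.nrm x : ℂ)) +
      cfun q (-z) * (q : ℂ) ^ ((-(I * z) - 1 / 2) * (T.nrm x : ℂ))

/-- A function on the tree is radial if it depends only on `|x|`. -/
def Radial (f : T.X → ℂ) : Prop := ∀ x y : T.X, T.nrm x = T.nrm y → f x = f y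

/-- The weak `L^r` quasinorm `sup_{t>0} t · μ(|u| > t)^{1/r}` (w.r.t. the counting
measure when the underlying measurable space carries `Measure.count`). -/
def weakN {Y : Type} [MeasurableSpace Y] (r : ℝ) (u : Y → ℂ) : ℝ≥0∞ :=
  ⨆ t : ℝ, ENNReal.ofReal t * (Measure.count {y | t < ‖u y‖}) ^ (1 / r)

/-- The Lorentz `L^{r,1}` norm `(1/r)∫₀^∞ u*(t) t^{1/r-1} dt`, written in the equivalent
layer-cake form `∫₀^∞ μ(|u| > s)^{1/r} ds`. -/
def lorN1 {Y : Type} [MeasurableSpace Y] (r : ℝ) (u : Y → ℂ) : ℝ≥0∞ :=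
  ∫⁻ s in Set.Ioi (0 : ℝ), (Measure.count {y | s < ‖u y‖}) ^ (1 / r)

/-- The boundary `Ω`: infinite geodesic rays starting at `o`. -/
structure Boundary where
  seq : ℕ → T.X
  start : seq 0 = T.o
  adj : ∀ n, T.G.Adj (seq n) (seq (n + 1))
  dist_eq : ∀ n, T.G.dist T.o (seq n) = n

/-- The basic boundary set `E(x) = {ω : ω_{|x|} = x}`. -/
def E (x : T.X) : Set T.Boundary := {ω | ω.seq (T.nrm x) = x}

/-- The σ-algebra on `Ω` generated by the sets `E(x)`. -/
instance : MeasurableSpace T.Boundary :=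
  MeasurableSpace.generateFrom {S | ∃ x : T.X, S = T.E x}

/-- `|c(x,ω)|`: the distance from `o` of the last vertex on the geodesic from `o` to `x`
lying on the ray `ω`. -/
def confl (ω : T.Boundary) (x : T.X) : ℕ :=
  Nat.findGreatest (fun n => n + T.G.dist (ω.seq n) x = T.nrm x) (T.nrm x)

/-- The Poisson kernel `p(x,ω) = q^{h_ω(x)} = q^{2|c(x,ω)| - |x|}`. -/
def pker (ω : T.Boundary) (x : T.X) : ℝ :=
  (q : ℝ) ^ ((2 * (T.confl ω x) : ℤ) - (T.nrm x : ℤ))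

/-- The Poisson transform `P_z F(x) = ∫_Ω p(x,ω)^{1/2+iz} F(ω) dν(ω)`. -/
def ptrans (ν : Measure T.Boundary) (z : ℂ) (F : T.Boundary → ℂ) (x : T.X) : ℂ :=
  ∫ ω, ((T.pker ω x : ℂ) ^ ((1 : ℂ) / 2 + I * z)) * F ω ∂ν

/-- The Laplacian `ℒu(x) = (q+1)⁻¹ ∑_{y ∼ x} u(y)`. -/
def lap (u : T.X → ℂ) (x : T.X) : ℂ :=
  (1 / ((q : ℂ) + 1)) * ∑' y : T.G.neighborSet x, u y

/-- `γ(z) = (q^{1/2+iz} + q^{1/2-iz})/(q+1)`. -/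
def gam (q : ℕ) (z : ℂ) : ℂ :=
  ((q : ℂ) ^ ((1 : ℂ) / 2 + I * z) + (q : ℂ) ^ ((1 : ℂ) / 2 - I * z)) / ((q : ℂ) + 1)

/-- The conditional expectation `ℰ_n F(ω) = ν(E(ω_n))⁻¹ ∫_{E(ω_n)} F dν` (real valued). -/
def condE (ν : Measure T.Boundary) (F : T.Boundary → ℝ) (n : ℕ) (ω : T.Boundary) : ℝ :=
  (ν {ω' : T.Boundary | ω'.seq n = ω.seq n}).toReal⁻¹ *
    ∫ ω' in {ω' : T.Boundary | ω'.seq n = ω.seq n}, F ω' ∂ν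

/-- The conditional expectation (complex valued). -/
def condEC (ν : Measure T.Boundary) (F : T.Boundary → ℂ) (n : ℕ) (ω : T.Boundary) : ℂ :=
  (((ν {ω' : T.Boundary | ω'.seq n = ω.seq n}).toReal⁻¹ : ℝ) : ℂ) *
    ∫ ω' in {ω' : T.Boundary | ω'.seq n = ω.seq n}, F ω' ∂ν

/-- The martingale maximal function `ℰF(ω) = sup_n |ℰ_n F(ω)|`, valued in `[0,∞]`. -/
def maximal (ν : Measure T.Boundary) (F : T.Boundary → ℝ) (ω : T.Boundary) : ℝ≥0∞ :=
  ⨆ n : ℕ, ENNReal.ofReal |T.condE ν F n ω|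

/-- The martingale difference `Δ_n F = ℰ_n F - ℰ_{n-1} F`, with `ℰ_{-1} = 0`. -/
def deltaC (ν : Measure T.Boundary) (F : T.Boundary → ℂ) (n : ℕ) (ω : T.Boundary) : ℂ :=
  T.condEC ν F n ω - if n = 0 then 0 else T.condEC ν F (n - 1) ω

/-- `y` and `x` have the same `n`-th vertex on their geodesics from `o`. -/
def sameAt (n : ℕ) (x y : T.X) : Prop :=
  ∃ v : T.X, T.nrm v = n ∧ T.nrm v + T.G.dist v x = T.nrm x ∧ T.nrm v + T.G.dist v y = T.nrm y

/-- `S(n,x)`: `{x}` if `|x| ≤ n`, and `{y : |y| = |x|, y_n = x_n}` otherwise. -/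
def sphereSet (n : ℕ) (x : T.X) : Set T.X :=
  if T.nrm x ≤ n then {x} else {y | T.nrm y = T.nrm x ∧ T.sameAt n x y}

open Classical in
/-- `ε_n u(x) = (#S(n,x))⁻¹ ∑_{y ∈ S(n,x)} u(y)`. -/
def epsOp (n : ℕ) (u : T.X → ℂ) (x : T.X) : ℂ :=
  (((T.sphereSet n x).ncard : ℂ))⁻¹ * ∑' y : T.sphereSet n x, u y

/-- The ball `B(x,r)`. -/
def ball (x : T.X) (r : ℕ) : Set T.X := {y | T.G.dist x y ≤ r}

/-- `ℳu(x) = sup_{r ≥ 1} (#B(x,r))^{-1/2} ∑_{y ∈ B(x,r)} |u(y)|`, valued in `[0,∞]`. -/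
def maxOp (u : T.X → ℂ) (x : T.X) : ℝ≥0∞ :=
  ⨆ r : ℕ+, (Measure.count (T.ball x (r : ℕ))) ^ (-(1 : ℝ) / 2) *
    ∑' y : T.ball x (r : ℕ), ENNReal.ofReal (‖u y‖)

/-- The Helgason–Fourier transform `f̃(z,ω) = ∑_x f(x) p(x,ω)^{1/2+iz}`. -/
def hft (f : T.X → ℂ) (z : ℂ) (ω : T.Boundary) : ℂ :=
  ∑' x : T.X, f x * ((T.pker ω x : ℂ) ^ ((1 : ℂ) / 2 + I * z))

end HomTree

namespace HomTree

section TreeAux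

variable {q : ℕ} (T : HomTree q)

lemma nbr_finite (hq : 2 ≤ q) (x : T.X) : (T.G.neighborSet x).Finite := by
  by_contra h
  have h2 : (T.G.neighborSet x).ncard = 0 := Set.Infinite.ncard h
  rw [T.regular x] at h2
  omega

lemma adj_dist_ne (x y : T.X) (hxy : T.G.Adj x y) :
    T.G.dist T.o x ≠ T.G.dist T.o y := by
  classical
  intro h
  obtain ⟨p, hp, hl⟩ := T.connected.exists_path_of_dist T.o x
  have hy : y ∉ p.support := by
    intro hy
    have h1 : (p.takeUntil y hy).length + (p.dropUntil y hy).length = p.length := by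
      rw [← SimpleGraph.Walk.length_append, SimpleGraph.Walk.take_spec]
    have h2 : T.G.dist T.o y ≤ (p.takeUntil y hy).length := SimpleGraph.dist_le _
    have h3 : (p.dropUntil y hy).length = 0 := by omega
    exact hxy.ne' (SimpleGraph.Walk.eq_of_length_eq_zero h3)
  have hp' : (p.concat hxy).IsPath := by
    rw [← SimpleGraph.Walk.isPath_reverse_iff, SimpleGraph.Walk.reverse_concat]
    refine SimpleGraph.Walk.IsPath.cons ?_ ?_
    · rwa [SimpleGraph.Walk.isPath_reverse_iff]
    · rw [SimpleGraph.Walk.support_reverse, List.mem_reverse]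
      exact hy
  obtain ⟨p2, hp2, hl2⟩ := T.connected.exists_path_of_dist T.o y
  have heq := T.acyclic.path_unique ⟨p.concat hxy, hp'⟩ ⟨p2, hp2⟩
  rw [Subtype.mk_eq_mk] at heq
  have hle : (p.concat hxy).length = p2.length := by rw [heq]
  rw [SimpleGraph.Walk.length_concat, hl, hl2, h] at hle
  omega

lemma exists_parent (x : T.X) (hx : T.G.dist T.o x ≠ 0) :
    ∃ y, T.G.Adj x y ∧ T.G.dist T.o y + 1 = T.G.dist T.o x := by
  obtain ⟨p, hl⟩ := (T.connected T.o x).exists_walk_length_eq_dist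
  have hl' : p.reverse.length = T.G.dist T.o x := by
    rw [SimpleGraph.Walk.length_reverse, hl]
  cases hrev : p.reverse with
  | nil =>
    rw [hrev] at hl'; simp at hl'; simp at hx
  | cons h w =>
    rename_i y
    refine ⟨y, h, ?_⟩
    rw [hrev] at hl'
    simp only [SimpleGraph.Walk.length_cons] at hl'
    have h1 : T.G.dist T.o y ≤ w.length := by
      have := SimpleGraph.dist_le w.reverse
      rwa [SimpleGraph.Walk.length_reverse] at this
    have h2 : T.G.dist T.o x ≤ T.G.dist T.o y + T.G.dist y x :=
      T.connected.dist_triangle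
    have h3 : T.G.dist y x = 1 := SimpleGraph.dist_eq_one_iff_adj.mpr h.symm
    omega

lemma parent_unique (x y₁ y₂ : T.X) (h1 : T.G.Adj x y₁) (h2 : T.G.Adj x y₂)
    (d1 : T.G.dist T.o y₁ + 1 = T.G.dist T.o x)
    (d2 : T.G.dist T.o y₂ + 1 = T.G.dist T.o x) : y₁ = y₂ := by
  classical
  obtain ⟨p1, hp1, hl1⟩ := T.connected.exists_path_of_dist T.o y₁
  obtain ⟨p2, hp2, hl2⟩ := T.connected.exists_path_of_dist T.o y₂
  have hx1 : x ∉ p1.support := by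
    intro hx
    have := SimpleGraph.dist_le (p1.takeUntil x hx)
    have := SimpleGraph.Walk.length_takeUntil_le p1 hx
    omega
  have hx2 : x ∉ p2.support := by
    intro hx
    have := SimpleGraph.dist_le (p2.takeUntil x hx)
    have := SimpleGraph.Walk.length_takeUntil_le p2 hx
    omega
  have hq1 : (p1.concat h1.symm).IsPath := by
    rw [← SimpleGraph.Walk.isPath_reverse_iff, SimpleGraph.Walk.reverse_concat]
    exact SimpleGraph.Walk.IsPath.cons (by rwa [SimpleGraph.Walk.isPath_reverse_iff])
      (by rw [SimpleGraph.Walk.support_reverse, List.mem_reverse]; exact hx1)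
  have hq2 : (p2.concat h2.symm).IsPath := by
    rw [← SimpleGraph.Walk.isPath_reverse_iff, SimpleGraph.Walk.reverse_concat]
    exact SimpleGraph.Walk.IsPath.cons (by rwa [SimpleGraph.Walk.isPath_reverse_iff])
      (by rw [SimpleGraph.Walk.support_reverse, List.mem_reverse]; exact hx2)
  have heq := T.acyclic.path_unique ⟨p1.concat h1.symm, hq1⟩ ⟨p2.concat h2.symm, hq2⟩
  rw [Subtype.mk_eq_mk] at heq
  have hsupp : (p1.concat h1.symm).reverse.support = (p2.concat h2.symm).reverse.support := by
    rw [heq]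
  rw [SimpleGraph.Walk.reverse_concat, SimpleGraph.Walk.reverse_concat] at hsupp
  simp only [SimpleGraph.Walk.support_cons] at hsupp
  have := List.tail_eq_of_cons_eq hsupp
  rw [p1.reverse.support_eq_cons, p2.reverse.support_eq_cons] at this
  exact List.head_eq_of_cons_eq this

end TreeAux
section SphAux

variable {q : ℕ} (T : HomTree q)

/-- The sphere of radius `n`. -/
def sphS (n : ℕ) : Set T.X := {x | T.G.dist T.o x = n}

/-- The ball of radius `N` around `o`. -/
def ballS (N : ℕ) : Set T.X := {x | T.G.dist T.o x ≤ N}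

lemma sph_zero : T.sphS 0 = {T.o} := by
  ext x
  simp only [sphS, Set.mem_setOf_eq, Set.mem_singleton_iff]
  rw [T.connected.dist_eq_zero_iff]
  exact comm

/-- The parent of a vertex. -/
def par (x : T.X) : T.X :=
  if h : T.G.dist T.o x = 0 then T.o else (T.exists_parent x h).choose

lemma par_spec (x : T.X) (h : T.G.dist T.o x ≠ 0) :
    T.G.Adj x (T.par x) ∧ T.G.dist T.o (T.par x) + 1 = T.G.dist T.o x := by
  rw [par, dif_neg h]
  exact (T.exists_parent x h).choose_spec

lemma sph_finite (hq : 2 ≤ q) : ∀ n, (T.sphS n).Finite := by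
  intro n
  induction n with
  | zero => rw [sph_zero]; exact Set.finite_singleton _
  | succ n ih =>
    refine Set.Finite.subset (Set.Finite.biUnion ih (fun x _ => T.nbr_finite hq x)) ?_
    intro y hy
    have hy' : T.G.dist T.o y = n + 1 := hy
    have h0 : T.G.dist T.o y ≠ 0 := by omega
    obtain ⟨hadj, hd⟩ := T.par_spec y h0
    refine Set.mem_biUnion (s := T.sphS n) (t := fun x => T.G.neighborSet x) ?_ hadj.symm
    show T.G.dist T.o (T.par y) = n
    omega

/-- The children of a vertex, as a set. -/
def chlSet (x : T.X) : Set T.X :=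
  {y | T.G.Adj x y ∧ T.G.dist T.o y = T.G.dist T.o x + 1}

lemma chlSet_finite (hq : 2 ≤ q) (x : T.X) : (T.chlSet x).Finite :=
  (T.nbr_finite hq x).subset (fun y hy => hy.1)

/-- The children of a vertex, as a finset. -/
def chl (hq : 2 ≤ q) (x : T.X) : Finset T.X := (T.chlSet_finite hq x).toFinset

open Classical in
lemma chlSet_ncard (hq : 2 ≤ q) (x : T.X) :
    (T.chlSet x).ncard = if x = T.o then q + 1 else q := by
  by_cases hx : x = T.o
  · rw [if_pos hx]
    have : T.chlSet x = T.G.neighborSet x := by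
      ext y
      simp only [chlSet, Set.mem_setOf_eq, SimpleGraph.mem_neighborSet]
      refine ⟨fun h => h.1, fun h => ⟨h, ?_⟩⟩
      subst hx
      rw [SimpleGraph.dist_self]
      exact SimpleGraph.dist_eq_one_iff_adj.mpr h
    rw [this, T.regular x]
  · rw [if_neg hx]
    have hn0 : T.G.dist T.o x ≠ 0 := fun h => hx ((T.connected.dist_eq_zero_iff).mp h).symm
    have key : ∀ y, T.G.Adj x y →
        ((¬ T.G.dist T.o y = T.G.dist T.o x + 1) ↔ (T.G.dist T.o y + 1 = T.G.dist T.o x)) := by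
      intro y hy
      have h1 : T.G.dist T.o y ≤ T.G.dist T.o x + T.G.dist x y := T.connected.dist_triangle
      have h2 : T.G.dist T.o x ≤ T.G.dist T.o y + T.G.dist y x := T.connected.dist_triangle
      have h3 : T.G.dist x y = 1 := SimpleGraph.dist_eq_one_iff_adj.mpr hy
      have h4 : T.G.dist y x = 1 := SimpleGraph.dist_eq_one_iff_adj.mpr hy.symm
      have h5 := T.adj_dist_ne x y hy
      omega
    have hsplit : T.G.neighborSet x = T.chlSet x ∪ {T.par x} := by
      ext y
      simp only [SimpleGraph.mem_neighborSet, Set.mem_union, Set.mem_singleton_iff, chlSet,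
        Set.mem_setOf_eq]
      constructor
      · intro hy
        by_cases hc : T.G.dist T.o y = T.G.dist T.o x + 1
        · exact Or.inl ⟨hy, hc⟩
        · refine Or.inr ?_
          exact T.parent_unique x y (T.par x) hy (T.par_spec x hn0).1
            (((key y hy).mp hc)) (T.par_spec x hn0).2
      · rintro (⟨hy, _⟩ | rfl)
        · exact hy
        · exact (T.par_spec x hn0).1
    have hdisj : Disjoint (T.chlSet x) ({T.par x} : Set T.X) := by
      rw [Set.disjoint_left]
      rintro y ⟨_, hd⟩ hy
      rw [Set.mem_singleton_iff] at hy
      subst hy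
      have := (T.par_spec x hn0).2
      omega
    have hcard : (T.chlSet x ∪ {T.par x}).ncard = (T.chlSet x).ncard + 1 := by
      rw [Set.ncard_union_eq hdisj (T.chlSet_finite hq x) (Set.finite_singleton _),
        Set.ncard_singleton]
    rw [← hsplit, T.regular x] at hcard
    omega

open Classical in
lemma chl_card (hq : 2 ≤ q) (x : T.X) :
    (T.chl hq x).card = if x = T.o then q + 1 else q := by
  rw [chl, ← Set.ncard_eq_toFinset_card _ (T.chlSet_finite hq x), T.chlSet_ncard hq x]

lemma sph_card (hq : 2 ≤ q) : ∀ n, (T.sphS (n+1)).ncard = (q+1) * q^n := by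
  classical
  have main : ∀ n : ℕ, (T.sphS (n+1)).ncard = ∑ x ∈ (T.sph_finite hq n).toFinset, (T.chl hq x).card := by
    intro n
    rw [Set.ncard_eq_toFinset_card _ (T.sph_finite hq (n+1))]
    rw [Finset.card_eq_sum_card_fiberwise (f := T.par) (t := (T.sph_finite hq n).toFinset) ?_]
    · refine Finset.sum_congr rfl (fun x hx => ?_)
      rw [Set.Finite.mem_toFinset] at hx
      have hx' : T.G.dist T.o x = n := hx
      congr 1
      ext y
      simp only [Finset.mem_filter, Set.Finite.mem_toFinset, chl, chlSet, Set.mem_setOf_eq]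
      constructor
      · rintro ⟨hy, hpy⟩
        have hy' : T.G.dist T.o y = n + 1 := hy
        have h0 : T.G.dist T.o y ≠ 0 := by omega
        obtain ⟨hadj, hd⟩ := T.par_spec y h0
        subst hpy
        exact ⟨hadj.symm, by omega⟩
      · rintro ⟨hadj, hd⟩
        have hy' : T.G.dist T.o y = n + 1 := by omega
        have h0 : T.G.dist T.o y ≠ 0 := by omega
        have hd2 := (T.par_spec y h0).2
        refine ⟨hy', ?_⟩
        exact T.parent_unique y (T.par y) x (T.par_spec y h0).1 hadj.symm
          (by omega) (by omega)
    · intro y hy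
      rw [Finset.mem_coe, Set.Finite.mem_toFinset] at hy ⊢
      have hy' : T.G.dist T.o y = n + 1 := hy
      have h0 : T.G.dist T.o y ≠ 0 := by omega
      have := (T.par_spec y h0).2
      show T.G.dist T.o (T.par y) = n
      omega
  intro n
  induction n with
  | zero =>
    rw [main 0]
    have h0 : (T.sph_finite hq 0).toFinset = {T.o} := by
      ext x
      rw [Set.Finite.mem_toFinset, T.sph_zero]
      simp
    rw [h0, Finset.sum_singleton, T.chl_card hq, if_pos rfl]
    simp
  | succ n ih =>
    rw [main (n+1)]
    have hconst : ∀ x ∈ (T.sph_finite hq (n+1)).toFinset, (T.chl hq x).card = q := by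
      intro x hx
      rw [Set.Finite.mem_toFinset] at hx
      have hx' : T.G.dist T.o x = n + 1 := hx
      rw [T.chl_card hq, if_neg]
      intro h
      subst h
      rw [SimpleGraph.dist_self] at hx'
      omega
    rw [Finset.sum_congr rfl hconst, Finset.sum_const, smul_eq_mul]
    rw [← Set.ncard_eq_toFinset_card _ (T.sph_finite hq (n+1)), ih]
    ring

lemma sph_card_lower (hq : 2 ≤ q) (n : ℕ) : q ^ n ≤ (T.sphS n).ncard := by
  cases n with
  | zero => rw [T.sph_zero]; simp
  | succ n =>
    rw [T.sph_card hq n]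
    have : q^(n+1) = q * q^n := by ring
    rw [this]
    exact Nat.mul_le_mul_right _ (by omega)

lemma ball_zero : T.ballS 0 = {T.o} := by
  ext x
  simp only [ballS, Set.mem_setOf_eq, Nat.le_zero, Set.mem_singleton_iff]
  rw [T.connected.dist_eq_zero_iff]
  exact comm

lemma ball_succ (N : ℕ) : T.ballS (N+1) = T.ballS N ∪ T.sphS (N+1) := by
  ext x
  simp only [ballS, sphS, Set.mem_setOf_eq, Set.mem_union]
  omega

lemma ball_finite (hq : 2 ≤ q) : ∀ N, (T.ballS N).Finite := by
  intro N
  induction N with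
  | zero => rw [ball_zero]; exact Set.finite_singleton _
  | succ N ih => rw [ball_succ]; exact ih.union (T.sph_finite hq (N+1))

lemma ball_card (hq : 2 ≤ q) : ∀ N, (T.ballS N).ncard ≤ (q+1) * q^(N+1) := by
  intro N
  induction N with
  | zero =>
    rw [ball_zero, Set.ncard_singleton, pow_one]
    have h1 : q ≤ (q+1) * q := Nat.le_mul_of_pos_left q (by omega)
    omega
  | succ N ih =>
    rw [ball_succ]
    calc (T.ballS N ∪ T.sphS (N+1)).ncard ≤ (T.ballS N).ncard + (T.sphS (N+1)).ncard :=
          Set.ncard_union_le _ _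
      _ ≤ (q+1) * q^(N+1) + (q+1) * q^N := by rw [T.sph_card hq N]; omega
      _ = (q+1) * q^N * (q+1) := by ring
      _ ≤ (q+1) * q^N * (q*q) := Nat.mul_le_mul_left _ (by nlinarith)
      _ = (q+1) * q^(N+1+1) := by ring

end SphAux
section MeasAux

variable {q : ℕ} (T : HomTree q)

instance : MeasurableSingletonClass T.X := ⟨fun _ => trivial⟩

lemma ennreal_pow_rpow (hq0 : 0 < q) (n : ℕ) (e : ℝ) :
    ((q:ℝ≥0∞)^n)^(e : ℝ) = ENNReal.ofReal (((q:ℝ) ^ (e:ℝ)) ^ n) := by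
  have h1 : ((q:ℝ≥0∞)^n)^(e:ℝ) = ((q:ℝ≥0∞)^(e:ℝ))^n := by
    rw [← ENNReal.rpow_natCast ((q:ℝ≥0∞)^(e:ℝ)) n, ← ENNReal.rpow_natCast (q:ℝ≥0∞) n,
      ← ENNReal.rpow_mul, ← ENNReal.rpow_mul, mul_comm]
  rw [h1, ENNReal.ofReal_pow (Real.rpow_nonneg (by positivity) _),
    ← ENNReal.ofReal_rpow_of_pos (by exact_mod_cast hq0 : (0:ℝ) < (q:ℝ)), ENNReal.ofReal_natCast]

lemma count_le_of_finite {s : Set T.X} (hs : s.Finite) (m : ℕ) (hm : s.ncard ≤ m) :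
    Measure.count s ≤ (m : ℝ≥0∞) := by
  rw [Measure.count_apply_finite _ hs]
  have h2 : hs.toFinset.card ≤ m := by rw [← Set.ncard_eq_toFinset_card _ hs]; exact hm
  exact_mod_cast h2

lemma count_ge_of_finite {s : Set T.X} (hs : s.Finite) (m : ℕ) (hm : m ≤ s.ncard) :
    (m : ℝ≥0∞) ≤ Measure.count s := by
  rw [Measure.count_apply_finite _ hs]
  have h2 : m ≤ hs.toFinset.card := by rw [← Set.ncard_eq_toFinset_card _ hs]; exact hm
  exact_mod_cast h2

/-- Master lemma, finiteness direction. -/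
lemma weakN_lt_top_of_bound (hq : 2 ≤ q) {p' : ℝ} (hp' : 0 < 1/p') (u : T.X → ℂ)
    {C : ℝ} (hC : 0 < C)
    (hub : ∀ x, ‖u x‖ ≤ C * ((q:ℝ) ^ (-(1/p')))^(T.G.dist T.o x)) :
    weakN p' u < ⊤ := by
  have hq1 : (1:ℝ) < (q:ℝ) := by exact_mod_cast (by omega : 1 < q)
  set r : ℝ := (q:ℝ) ^ (-(1/p')) with hrdef
  set R : ℝ := (q:ℝ) ^ ((1:ℝ)/p') with hRdef
  have hr0 : 0 < r := Real.rpow_pos_of_pos (by positivity) _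
  have hr1 : r < 1 := Real.rpow_lt_one_of_one_lt_of_neg hq1 (by linarith)
  have hR0 : 0 < R := Real.rpow_pos_of_pos (by positivity) _
  have hrR : r * R = 1 := by
    rw [hrdef, hRdef, ← Real.rpow_add (by positivity)]
    norm_num
  set B : ℝ≥0∞ := ((q:ℝ≥0∞)+1)^((1:ℝ)/p') * ENNReal.ofReal (C * R) + ENNReal.ofReal C with hBdef
  have hB : B < ⊤ := by
    refine ENNReal.add_lt_top.mpr ⟨ENNReal.mul_lt_top ?_ ENNReal.ofReal_lt_top, ENNReal.ofReal_lt_top⟩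
    exact ENNReal.rpow_lt_top_of_nonneg (le_of_lt hp') (by simp)
  refine lt_of_le_of_lt (iSup_le fun t => ?_) hB
  rcases le_or_gt t 0 with ht | ht
  · rw [ENNReal.ofReal_of_nonpos ht, zero_mul]
    exact zero_le
  rcases le_or_gt C t with htC | htC
  · have hempty : {y | t < ‖u y‖} = ∅ := by
      ext x
      simp only [Set.mem_setOf_eq, Set.mem_empty_iff_false, iff_false, not_lt]
      calc ‖u x‖ ≤ C * r ^ (T.G.dist T.o x) := hub x
        _ ≤ C * 1 := by
            have := pow_le_one₀ (le_of_lt hr0) (le_of_lt hr1) (n := T.G.dist T.o x)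
            nlinarith
        _ ≤ t := by linarith
    rw [hempty]
    simp only [measure_empty]
    rw [ENNReal.zero_rpow_of_pos hp', mul_zero]
    exact zero_le
  · -- t < C
    have hex : ∃ n : ℕ, C * r^(n+1) ≤ t := by
      have htend : Filter.Tendsto (fun n : ℕ => C * r^(n+1)) Filter.atTop (nhds 0) := by
        have h0 : Filter.Tendsto (fun n : ℕ => r^n) Filter.atTop (nhds 0) :=
          tendsto_pow_atTop_nhds_zero_of_lt_one (le_of_lt hr0) hr1
        have := (h0.const_mul (C*r)).comp (Filter.tendsto_atTop_atTop_of_monotone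
          (fun a b h => h) (fun b => ⟨b, le_refl b⟩))
        simpa [mul_comm, mul_assoc, pow_succ, mul_left_comm] using (h0.const_mul (C*r))
      obtain ⟨n, hn⟩ := (htend.eventually_lt_const ht).exists
      exact ⟨n, le_of_lt hn⟩
    set N := Nat.find hex with hNdef
    have hPN : C * r^(N+1) ≤ t := Nat.find_spec hex
    have hsub : {y | t < ‖u y‖} ⊆ T.ballS N := by
      intro x hx
      simp only [Set.mem_setOf_eq] at hx
      by_contra hb
      have hbx : N + 1 ≤ T.G.dist T.o x := by
        simp only [ballS, Set.mem_setOf_eq, not_le] at hb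
        omega
      have : ‖u x‖ ≤ t :=
        calc ‖u x‖ ≤ C * r ^ (T.G.dist T.o x) := hub x
          _ ≤ C * r ^ (N+1) := by
              have := pow_le_pow_of_le_one (le_of_lt hr0) (le_of_lt hr1) hbx
              nlinarith
          _ ≤ t := hPN
      linarith
    have hcount : Measure.count {y | t < ‖u y‖} ≤ (((q+1) * q^(N+1) : ℕ) : ℝ≥0∞) :=
      le_trans (measure_mono hsub)
        (count_le_of_finite T (T.ball_finite hq N) _ (T.ball_card hq N))
    have htR : t * R^(N+1) ≤ C * R := by
      rcases Nat.eq_zero_or_pos N with h0 | h0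
      · rw [h0, pow_one]
        nlinarith
      · have hmin : ¬ (C * r^((N-1)+1) ≤ t) := Nat.find_min hex (by omega)
        push_neg at hmin
        have hNN : N - 1 + 1 = N := by omega
        rw [hNN] at hmin
        have hrRn : r^N * R^N = 1 := by
          rw [← mul_pow, hrR, one_pow]
        calc t * R^(N+1) ≤ (C * r^N) * R^(N+1) := by
              have hRp : (0:ℝ) < R^(N+1) := by positivity
              nlinarith
          _ = C * R * (r^N * R^N) := by ring
          _ = C * R := by rw [hrRn, mul_one]
    calc ENNReal.ofReal t * (Measure.count {y | t < ‖u y‖}) ^ (1/p')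
        ≤ ENNReal.ofReal t * (((q+1) * q^(N+1) : ℕ) : ℝ≥0∞) ^ (1/p') := by
          exact mul_le_mul_right (ENNReal.rpow_le_rpow hcount (le_of_lt hp')) _
      _ = ENNReal.ofReal t * (((q:ℝ≥0∞)+1) * ((q:ℝ≥0∞)^(N+1))) ^ (1/p') := by
          congr 2
          push_cast
          ring
      _ = ENNReal.ofReal t * (((q:ℝ≥0∞)+1) ^ (1/p') * ((q:ℝ≥0∞)^(N+1)) ^ (1/p')) := by
          rw [ENNReal.mul_rpow_of_nonneg _ _ (le_of_lt hp')]
      _ = ((q:ℝ≥0∞)+1) ^ (1/p') * (ENNReal.ofReal t * ENNReal.ofReal (R^(N+1))) := by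
          rw [ennreal_pow_rpow (by omega) (N+1) (1/p')]
          ring
      _ = ((q:ℝ≥0∞)+1) ^ (1/p') * ENNReal.ofReal (t * R^(N+1)) := by
          rw [← ENNReal.ofReal_mul (le_of_lt ht)]
      _ ≤ ((q:ℝ≥0∞)+1) ^ (1/p') * ENNReal.ofReal (C * R) := by
          exact mul_le_mul_right (ENNReal.ofReal_le_ofReal htR) _
      _ ≤ B := le_add_self.trans_eq (by rw [hBdef, add_comm])

/-- Master lemma, infiniteness direction. -/
lemma weakN_eq_top_of_lower (hq : 2 ≤ q) {p' : ℝ} (hp' : 0 < 1/p') (u : T.X → ℂ)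
    {c s : ℝ} (hc : 0 < c) (hs : (q:ℝ) ^ (-(1/p')) < s) (N₀ : ℕ)
    (hlb : ∀ x, N₀ ≤ T.G.dist T.o x → c * s^(T.G.dist T.o x) ≤ ‖u x‖) :
    weakN p' u = ⊤ := by
  by_contra hW
  have hq1 : (1:ℝ) < (q:ℝ) := by exact_mod_cast (by omega : 1 < q)
  set r : ℝ := (q:ℝ) ^ (-(1/p')) with hrdef
  set R : ℝ := (q:ℝ) ^ ((1:ℝ)/p') with hRdef
  have hr0 : 0 < r := Real.rpow_pos_of_pos (by positivity) _
  have hR0 : 0 < R := Real.rpow_pos_of_pos (by positivity) _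
  have hrR : r * R = 1 := by
    rw [hrdef, hRdef, ← Real.rpow_add (by positivity)]
    norm_num
  have hs0 : 0 < s := lt_trans hr0 hs
  have key : ∀ n : ℕ, N₀ ≤ n → c/2 * (s*R)^n ≤ (weakN p' u).toReal := by
    intro n hn
    have hsph : T.sphS n ⊆ {y | (c/2 * s^n) < ‖u y‖} := by
      intro x hx
      have hx' : T.G.dist T.o x = n := hx
      have := hlb x (by omega)
      rw [hx'] at this
      have hsn : 0 < s^n := by positivity
      simp only [Set.mem_setOf_eq]
      nlinarith
    have hcount : ((q^n : ℕ) : ℝ≥0∞) ≤ Measure.count {y | (c/2 * s^n) < ‖u y‖} := by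
      refine le_trans ?_ (measure_mono hsph)
      exact le_trans (count_ge_of_finite T (T.sph_finite hq n) _ (T.sph_card_lower hq n))
        (le_refl _)
    have hterm : ENNReal.ofReal (c/2 * s^n) * ((q^n : ℕ) : ℝ≥0∞) ^ (1/p') ≤ weakN p' u := by
      refine le_trans ?_ (le_iSup (fun t : ℝ => ENNReal.ofReal t *
        (Measure.count {y | t < ‖u y‖}) ^ (1/p')) (c/2 * s^n))
      exact mul_le_mul_right (ENNReal.rpow_le_rpow hcount (le_of_lt hp')) _
    have hcast : ((q^n : ℕ) : ℝ≥0∞) ^ ((1:ℝ)/p') = ENNReal.ofReal (R^n) := by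
      rw [Nat.cast_pow, ennreal_pow_rpow (by omega) n (1/p')]
    rw [hcast, ← ENNReal.ofReal_mul (by positivity)] at hterm
    have := (ENNReal.ofReal_le_iff_le_toReal hW).mp hterm
    calc c/2 * (s*R)^n = c/2 * s^n * R^n := by rw [mul_pow]; ring
      _ ≤ (weakN p' u).toReal := this
  have hsR : 1 < s * R := by
    calc (1:ℝ) = r * R := hrR.symm
      _ < s * R := by nlinarith
  have htend : Filter.Tendsto (fun n : ℕ => c/2 * (s*R)^n) Filter.atTop Filter.atTop := by
    exact Filter.Tendsto.const_mul_atTop (by positivity) (tendsto_pow_atTop_atTop_of_one_lt hsR)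
  obtain ⟨n, hn1, hn2⟩ := ((htend.eventually_gt_atTop ((weakN p' u).toReal)).and
    (Filter.eventually_ge_atTop N₀)).exists
  exact absurd (key n hn2) (not_le.mpr hn1)

end MeasAux
section ModAux

variable {q : ℕ} (T : HomTree q)

lemma abs_q_cpow (hq0 : 0 < q) (w : ℂ) : ‖(q:ℂ) ^ w‖ = (q:ℝ) ^ w.re := by
  have h : ((q:ℂ)) = (((q:ℝ)):ℂ) := by push_cast; rfl
  rw [h]
  exact Complex.norm_cpow_eq_rpow_re_of_pos (by exact_mod_cast hq0) w

lemma rpow_inj {Q : ℝ} (hq1 : 1 < Q) {a b : ℝ} (h : Q^(a:ℝ) = Q^(b:ℝ)) : a = b := by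
  by_contra hne
  rcases lt_or_gt_of_ne hne with hl | hl
  · exact absurd h (ne_of_lt ((Real.rpow_lt_rpow_left_iff hq1).mpr hl))
  · exact absurd h.symm (ne_of_lt ((Real.rpow_lt_rpow_left_iff hq1).mpr hl))

lemma q_cpow_ne (hq : 2 ≤ q) {w₁ w₂ : ℂ} (h : w₁.re ≠ w₂.re) :
    (q:ℂ) ^ w₁ - (q:ℂ) ^ w₂ ≠ 0 := by
  intro hc
  rw [sub_eq_zero] at hc
  have := congrArg (‖·‖) hc
  rw [abs_q_cpow (by omega), abs_q_cpow (by omega)] at this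
  exact h (rpow_inj (by exact_mod_cast (by omega : 1 < q)) this)

lemma cfun_ne_zero (hq : 2 ≤ q) {z : ℂ} (h0 : z.im ≠ 0) (h2 : z.im ≠ 1/2) :
    cfun q z ≠ 0 := by
  have hqC : (q:ℂ) ≠ 0 := Nat.cast_ne_zero.mpr (by omega)
  have hq1C : ((q:ℂ) + 1) ≠ 0 := by
    have : ((q:ℂ) + 1) = ((q+1 : ℕ) : ℂ) := by push_cast; ring
    rw [this]
    exact Nat.cast_ne_zero.mpr (by omega)
  refine mul_ne_zero (div_ne_zero ?_ hq1C) (div_ne_zero ?_ ?_)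
  · intro h
    rw [Complex.cpow_eq_zero_iff] at h
    exact hqC h.1
  · refine q_cpow_ne hq ?_
    have e1 : ((1:ℂ)/2 + I*z).re = 1/2 - z.im := by
      simp [Complex.add_re, Complex.mul_re]
      ring
    have e2 : (-(1:ℂ)/2 - I*z).re = -(1/2) + z.im := by
      simp [Complex.sub_re, Complex.mul_re]
      ring
    rw [e1, e2]
    intro h
    apply h2
    linarith
  · refine q_cpow_ne hq ?_
    have e1 : (I*z).re = -z.im := by simp [Complex.mul_re]
    have e2 : (-(I*z)).re = z.im := by simp [Complex.mul_re]
    rw [e1, e2]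
    intro h
    apply h0
    linarith

lemma abs_term (hq : 2 ≤ q) (c w : ℂ) (n : ℕ) :
    ‖c * (q:ℂ) ^ (w * (n:ℂ))‖ =
      ‖c‖ * ((q:ℝ) ^ (w.re : ℝ))^n := by
  rw [norm_mul, abs_q_cpow (by omega)]
  congr 1
  have hre : (w * (n:ℂ)).re = w.re * (n:ℝ) := by
    simp [Complex.mul_re]
  rw [hre, Real.rpow_mul (by positivity), Real.rpow_natCast]

lemma re_fst (z : ℂ) : (I*z - 1/2).re = -z.im - 1/2 := by
  simp [Complex.sub_re, Complex.mul_re]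

lemma re_snd (z : ℂ) : (-(I*z) - 1/2).re = z.im - 1/2 := by
  simp [Complex.sub_re, Complex.mul_re]

lemma special_bound (hq : 2 ≤ q) {c' : ℝ} (hp' : 0 < c') (hhalf : c' < 1/2) (n : ℕ) :
    (((q:ℝ)-1)/((q:ℝ)+1) * n + 1) * ((q:ℝ)^(-(1:ℝ)/2))^n ≤
      (max 1 ((q:ℝ)^((1:ℝ)/2 - c') - 1)⁻¹) * ((q:ℝ)^(-c' : ℝ))^n := by
  have hq0 : (0:ℝ) < (q:ℝ) := by positivity
  have hq1 : (1:ℝ) < (q:ℝ) := by exact_mod_cast (by omega : 1 < q)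
  set s : ℝ := (q:ℝ)^((1:ℝ)/2 - c') - 1 with hsdef
  have hs0 : 0 < s := by
    have : (1:ℝ) < (q:ℝ)^((1:ℝ)/2 - c') :=
      Real.one_lt_rpow_iff_of_pos hq0 |>.mpr (Or.inl ⟨hq1, by linarith⟩)
    simp only [hsdef]
    linarith
  set M : ℝ := max 1 s⁻¹ with hMdef
  have hM1 : 1 ≤ M := le_max_left _ _
  have hcoef : ((q:ℝ)-1)/((q:ℝ)+1) * n + 1 ≤ (n:ℝ) + 1 := by
    have h1 : ((q:ℝ)-1)/((q:ℝ)+1) ≤ 1 := by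
      rw [div_le_one (by linarith)]
      linarith
    have h2 : (0:ℝ) ≤ (n:ℝ) := by positivity
    nlinarith
  have hn0 : (0:ℝ) ≤ (n:ℝ) := Nat.cast_nonneg n
  have hstep2 : (n:ℝ) + 1 ≤ M * (1 + n*s) := by
    rcases le_or_gt 1 s with h | h
    · have h2 : (1:ℝ) + n ≤ 1 + n*s := by nlinarith
      have h3 : (1:ℝ) + n*s ≤ M * (1+n*s) := by nlinarith
      linarith
    · have hcan : s⁻¹ * s = 1 := inv_mul_cancel₀ (ne_of_gt hs0)
      have hsinv : 1 ≤ s⁻¹ := (one_le_inv₀ hs0).mpr (le_of_lt h)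
      have hM : s⁻¹ ≤ M := le_max_right _ _
      have h4 : s⁻¹ * (1 + n*s) = s⁻¹ + n := by
        rw [mul_add, mul_comm ((n:ℝ)) s, ← mul_assoc, hcan]
        ring
      have h5 : (0:ℝ) < 1 + n*s := by nlinarith
      calc (n:ℝ) + 1 ≤ s⁻¹ + n := by linarith
        _ = s⁻¹ * (1 + n*s) := h4.symm
        _ ≤ M * (1 + n*s) := mul_le_mul_of_nonneg_right hM (le_of_lt h5)
  have hstep3 : 1 + (n:ℝ)*s ≤ (1+s)^n := one_add_mul_le_pow (by linarith) n
  have hbig : ((q:ℝ)-1)/((q:ℝ)+1) * n + 1 ≤ M * (1+s)^n := by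
    calc ((q:ℝ)-1)/((q:ℝ)+1) * n + 1 ≤ (n:ℝ) + 1 := hcoef
      _ ≤ M * (1 + n*s) := hstep2
      _ ≤ M * (1+s)^n := by nlinarith
  have hmul : (1+s) * (q:ℝ)^(-(1:ℝ)/2) = (q:ℝ)^(-c' : ℝ) := by
    have : (1:ℝ) + s = (q:ℝ)^((1:ℝ)/2 - c') := by simp [hsdef]
    rw [this, ← Real.rpow_add hq0]
    congr 1
    ring
  have hpowpos : (0:ℝ) < ((q:ℝ)^(-(1:ℝ)/2))^n := by positivity
  calc (((q:ℝ)-1)/((q:ℝ)+1) * n + 1) * ((q:ℝ)^(-(1:ℝ)/2))^n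
      ≤ (M * (1+s)^n) * ((q:ℝ)^(-(1:ℝ)/2))^n := by nlinarith
    _ = M * ((1+s) * (q:ℝ)^(-(1:ℝ)/2))^n := by rw [mul_pow]; ring
    _ = M * ((q:ℝ)^(-c' : ℝ))^n := by rw [hmul]

lemma abs_special (hq : 2 ≤ q) (n : ℕ) :
    ‖((((q:ℂ) - 1) / ((q:ℂ) + 1)) * (n : ℂ) + 1) * (q:ℂ) ^ (-(n:ℂ)/2)‖
      = (((q:ℝ)-1)/((q:ℝ)+1) * n + 1) * ((q:ℝ)^(-(1:ℝ)/2))^n := by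
  have hq1 : (1:ℝ) ≤ (q:ℝ) := by exact_mod_cast (by omega : 1 ≤ q)
  rw [norm_mul]
  congr 1
  · have h : ((((q:ℂ) - 1) / ((q:ℂ) + 1)) * (n:ℂ) + 1) =
        ((((((q:ℝ)-1)/((q:ℝ)+1) * n + 1 : ℝ)) : ℂ)) := by push_cast; ring
    rw [h, Complex.norm_real, Real.norm_eq_abs]
    have hco : (0:ℝ) ≤ ((q:ℝ)-1)/((q:ℝ)+1) := div_nonneg (by linarith) (by linarith)
    have hnn : (0:ℝ) ≤ ((q:ℝ)-1)/((q:ℝ)+1) * n + 1 := by positivity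
    exact abs_of_nonneg hnn
  · rw [abs_q_cpow (by omega)]
    have hre : ((-(n:ℂ))/2).re = (-(1:ℝ)/2) * (n:ℝ) := by
      simp [Complex.div_re]
      ring
    rw [show (-(n:ℂ)/2) = ((-(n:ℂ))/2) by ring, hre, Real.rpow_mul (by positivity),
      Real.rpow_natCast]


lemma abs_lower (a b : ℂ) : ‖a‖ - ‖b‖ ≤ ‖a + b‖ := by
  have := norm_sub_norm_le a (-b)
  simpa [sub_neg_eq_add] using this

/-- dominant-first-term lower bound gives infinite weak norm -/
lemma weakN_top_two (hq : 2 ≤ q) {p' : ℝ} (hp' : 0 < 1/p') (u : T.X → ℂ)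
    {a₁ a₂ e₁ e₂ : ℝ} (ha₁ : 0 < a₁) (ha₂ : 0 ≤ a₂) (he : e₂ < e₁)
    (hee : -(1/p') < e₁)
    (hu : ∀ x, a₁ * ((q:ℝ)^(e₁:ℝ))^(T.G.dist T.o x) - a₂ * ((q:ℝ)^(e₂:ℝ))^(T.G.dist T.o x)
      ≤ ‖u x‖) :
    weakN p' u = ⊤ := by
  have hq0 : (0:ℝ) < (q:ℝ) := by positivity
  have hq1 : (1:ℝ) < (q:ℝ) := by exact_mod_cast (by omega : 1 < q)
  have hbase : (0:ℝ) < (q:ℝ)^(e₂ - e₁ : ℝ) := Real.rpow_pos_of_pos hq0 _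
  have hbase1 : (q:ℝ)^(e₂ - e₁ : ℝ) < 1 :=
    Real.rpow_lt_one_of_one_lt_of_neg hq1 (by linarith)
  have htend : Filter.Tendsto (fun n : ℕ => a₂ * ((q:ℝ)^(e₂ - e₁ : ℝ))^n)
      Filter.atTop (nhds 0) := by
    have h0 := tendsto_pow_atTop_nhds_zero_of_lt_one (le_of_lt hbase) hbase1
    simpa using h0.const_mul a₂
  obtain ⟨N₀, hN₀⟩ := Filter.eventually_atTop.mp (htend.eventually_lt_const (by linarith : (0:ℝ) < a₁/2))
  refine weakN_eq_top_of_lower T hq hp' u (c := a₁/2) (s := (q:ℝ)^(e₁:ℝ)) (by linarith)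
    ((Real.rpow_lt_rpow_left_iff hq1).mpr hee) N₀ ?_
  intro x hx
  set n := T.G.dist T.o x with hn
  have hsplit : ((q:ℝ)^(e₂:ℝ))^n = ((q:ℝ)^(e₁:ℝ))^n * ((q:ℝ)^(e₂-e₁:ℝ))^n := by
    rw [← mul_pow, ← Real.rpow_add hq0]
    norm_num
  have h1 := hN₀ n hx
  have h2 := hu x
  rw [← hn] at h2
  have hp1 : (0:ℝ) < ((q:ℝ)^(e₁:ℝ))^n := by positivity
  nlinarith

/-- upper bound gives finite weak norm -/
lemma weakN_fin_of_bound (hq : 2 ≤ q) {p' : ℝ} (hp' : 0 < 1/p') (u : T.X → ℂ)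
    {a e : ℝ} (ha : 0 ≤ a) (he : e ≤ -(1/p'))
    (hu : ∀ x, ‖u x‖ ≤ a * ((q:ℝ)^(e:ℝ))^(T.G.dist T.o x)) :
    weakN p' u < ⊤ := by
  have hq1 : (1:ℝ) < (q:ℝ) := by exact_mod_cast (by omega : 1 < q)
  refine weakN_lt_top_of_bound T hq hp' u (C := a + 1) (by linarith) ?_
  intro x
  refine le_trans (hu x) ?_
  have h1 : ((q:ℝ)^(e:ℝ))^(T.G.dist T.o x) ≤ ((q:ℝ)^(-(1/p') : ℝ))^(T.G.dist T.o x) := by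
    apply pow_le_pow_left₀ (le_of_lt (Real.rpow_pos_of_pos (by positivity) _))
    exact (Real.rpow_le_rpow_left_iff hq1).mpr he
  have h2 : (0:ℝ) < ((q:ℝ)^(-(1/p') : ℝ))^(T.G.dist T.o x) := by positivity
  have h3 : (0:ℝ) ≤ ((q:ℝ)^(e:ℝ))^(T.G.dist T.o x) := by positivity
  nlinarith

lemma abs_special2 (hq : 2 ≤ q) (n : ℕ) :
    ‖(-1:ℂ)^n * ((((q:ℂ) - 1) / ((q:ℂ) + 1)) * (n : ℂ) + 1) * (q:ℂ) ^ (-(n:ℂ)/2)‖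
      = (((q:ℝ)-1)/((q:ℝ)+1) * n + 1) * ((q:ℝ)^(-(1:ℝ)/2))^n := by
  have h1 : ‖(-1:ℂ)^n‖ = 1 := by simp
  rw [mul_assoc, norm_mul, h1, one_mul, abs_special hq n]

end ModAux
/-- For `1 < p < 2`, `φ_z ∈ L^{p′,∞}(𝔛)` iff `|Im z| ≤ 1/p - 1/2`. -/
theorem statement1 {q : ℕ} (hq : 2 ≤ q) (T : HomTree q) (p p' : ℝ)
    (hp : 1 < p) (hp2 : p < 2) (hconj : 1 / p + 1 / p' = 1) (z : ℂ) :
    weakN p' (T.sph z) < ⊤ ↔ |z.im| ≤ 1 / p - 1 / 2 := by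
  classical
  have hq1R : (1:ℝ) < (q:ℝ) := by exact_mod_cast (by omega : 1 < q)
  have hp0 : (0:ℝ) < p := by linarith
  have hpinv1 : 1/p < 1 := by rw [div_lt_one hp0]; exact hp
  have hpinv2 : 1/2 < 1/p := by rw [div_lt_div_iff₀ (by norm_num) hp0]; linarith
  have h1p' : 1/p' = 1 - 1/p := by linarith
  have hp'pos : 0 < 1/p' := by rw [h1p']; linarith
  have hp'half : 1/p' < 1/2 := by rw [h1p']; linarith
  have hMpos : (0:ℝ) ≤ max 1 (((q:ℝ)^((1:ℝ)/2 - 1/p') - 1)⁻¹) :=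
    le_trans zero_le_one (le_max_left _ _)
  by_cases hB1 : ∃ k : ℤ, z = (k:ℂ) * ((tau q : ℝ) : ℂ)
  · have him : z.im = 0 := by obtain ⟨k, rfl⟩ := hB1; simp
    have hRHS : |z.im| ≤ 1/p - 1/2 := by rw [him, abs_zero]; linarith
    simp only [hRHS, iff_true]
    have hfun : T.sph z = fun x => ((((q:ℂ)-1)/((q:ℂ)+1)) * (T.nrm x : ℂ) + 1) *
        (q:ℂ)^(-(T.nrm x:ℂ)/2) := by
      funext x
      simp only [sph]
      rw [if_pos hB1]
    rw [hfun]
    refine weakN_fin_of_bound T hq hp'pos _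
      (a := max 1 (((q:ℝ)^((1:ℝ)/2 - 1/p') - 1)⁻¹)) (e := -(1/p')) hMpos (le_refl _) ?_
    intro x
    rw [abs_special hq (T.nrm x)]
    exact special_bound hq hp'pos hp'half (T.nrm x)
  by_cases hB2 : ∃ k : ℤ, z = ((tau q : ℝ):ℂ)/2 + (k:ℂ) * ((tau q : ℝ):ℂ)
  · have him : z.im = 0 := by obtain ⟨k, rfl⟩ := hB2; simp
    have hRHS : |z.im| ≤ 1/p - 1/2 := by rw [him, abs_zero]; linarith
    simp only [hRHS, iff_true]
    have hfun : T.sph z = fun x => (-1:ℂ)^(T.nrm x) * ((((q:ℂ)-1)/((q:ℂ)+1)) * (T.nrm x : ℂ) + 1) *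
        (q:ℂ)^(-(T.nrm x:ℂ)/2) := by
      funext x
      simp only [sph]
      rw [if_neg hB1, if_pos hB2]
    rw [hfun]
    refine weakN_fin_of_bound T hq hp'pos _
      (a := max 1 (((q:ℝ)^((1:ℝ)/2 - 1/p') - 1)⁻¹)) (e := -(1/p')) hMpos (le_refl _) ?_
    intro x
    rw [abs_special2 hq (T.nrm x)]
    exact special_bound hq hp'pos hp'half (T.nrm x)
  · have hfun : T.sph z = fun x => cfun q z * (q:ℂ)^((I*z - 1/2) * (T.nrm x : ℂ)) +
        cfun q (-z) * (q:ℂ)^((-(I*z) - 1/2) * (T.nrm x:ℂ)) := by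
      funext x
      simp only [sph]
      rw [if_neg hB1, if_neg hB2]
    rw [hfun]
    constructor
    · intro hfin
      by_contra hgt
      push_neg at hgt
      have him0 : z.im ≠ 0 := by
        intro h; rw [h, abs_zero] at hgt; linarith
      rcases lt_or_gt_of_ne him0 with hneg | hpos
      · have habs : |z.im| = -z.im := abs_of_neg hneg
        have hc1 : cfun q z ≠ 0 := cfun_ne_zero hq him0 (by linarith)
        have hc1' : 0 < ‖cfun q z‖ := norm_pos_iff.mpr hc1
        have htop := weakN_top_two T hq hp'pos
          (fun x => cfun q z * (q:ℂ)^((I*z - 1/2) * (T.nrm x : ℂ)) +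
            cfun q (-z) * (q:ℂ)^((-(I*z) - 1/2) * (T.nrm x:ℂ)))
          (a₁ := ‖cfun q z‖) (a₂ := ‖cfun q (-z)‖)
          (e₁ := -z.im - 1/2) (e₂ := z.im - 1/2) hc1' (norm_nonneg _)
          (by linarith) (by rw [h1p']; linarith) ?_
        · rw [htop] at hfin; exact lt_irrefl _ hfin
        · intro x
          have hnd : T.G.dist T.o x = T.nrm x := rfl
          rw [hnd]
          have hA := abs_term hq (cfun q z) (I*z - 1/2) (T.nrm x)
          have hB := abs_term hq (cfun q (-z)) (-(I*z) - 1/2) (T.nrm x)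
          rw [re_fst] at hA
          rw [re_snd] at hB
          rw [← hA, ← hB]
          exact abs_lower _ _
      · have habs : |z.im| = z.im := abs_of_pos hpos
        have hc2 : cfun q (-z) ≠ 0 := by
          refine cfun_ne_zero hq ?_ ?_
          · simp only [Complex.neg_im]; intro h; apply him0; linarith
          · simp only [Complex.neg_im]; intro h; linarith
        have hc2' : 0 < ‖cfun q (-z)‖ := norm_pos_iff.mpr hc2
        have htop := weakN_top_two T hq hp'pos
          (fun x => cfun q z * (q:ℂ)^((I*z - 1/2) * (T.nrm x : ℂ)) +
            cfun q (-z) * (q:ℂ)^((-(I*z) - 1/2) * (T.nrm x:ℂ)))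
          (a₁ := ‖cfun q (-z)‖) (a₂ := ‖cfun q z‖)
          (e₁ := z.im - 1/2) (e₂ := -z.im - 1/2) hc2' (norm_nonneg _)
          (by linarith) (by rw [h1p']; linarith) ?_
        · rw [htop] at hfin; exact lt_irrefl _ hfin
        · intro x
          have hnd : T.G.dist T.o x = T.nrm x := rfl
          rw [hnd]
          have hA := abs_term hq (cfun q z) (I*z - 1/2) (T.nrm x)
          have hB := abs_term hq (cfun q (-z)) (-(I*z) - 1/2) (T.nrm x)
          rw [re_fst] at hA
          rw [re_snd] at hB
          rw [← hA, ← hB]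
          have := abs_lower (cfun q (-z) * (q:ℂ)^((-(I*z) - 1/2) * (T.nrm x:ℂ)))
            (cfun q z * (q:ℂ)^((I*z - 1/2) * (T.nrm x : ℂ)))
          rwa [add_comm] at this
    · intro hle
      refine weakN_fin_of_bound T hq hp'pos _
        (a := ‖cfun q z‖ + ‖cfun q (-z)‖) (e := -(1/p'))
        (by positivity) (le_refl _) ?_
      intro x
      have hnd : T.G.dist T.o x = T.nrm x := rfl
      rw [hnd]
      have hA := abs_term hq (cfun q z) (I*z - 1/2) (T.nrm x)
      have hB := abs_term hq (cfun q (-z)) (-(I*z) - 1/2) (T.nrm x)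
      rw [re_fst] at hA
      rw [re_snd] at hB
      have htri := norm_add_le
        (cfun q z * (q:ℂ)^((I*z - 1/2) * (T.nrm x : ℂ)))
        (cfun q (-z) * (q:ℂ)^((-(I*z) - 1/2) * (T.nrm x:ℂ)))
      have hZpos : (0:ℝ) < (q:ℝ)^(-(1/p') : ℝ) := Real.rpow_pos_of_pos (by positivity) _
      have h1 : ((q:ℝ)^(-z.im - 1/2 : ℝ))^(T.nrm x) ≤ ((q:ℝ)^(-(1/p') : ℝ))^(T.nrm x) := by
        apply pow_le_pow_left₀ (le_of_lt (Real.rpow_pos_of_pos (by positivity) _))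
        refine (Real.rpow_le_rpow_left_iff hq1R).mpr ?_
        have := neg_le_abs z.im
        linarith
      have h2 : ((q:ℝ)^(z.im - 1/2 : ℝ))^(T.nrm x) ≤ ((q:ℝ)^(-(1/p') : ℝ))^(T.nrm x) := by
        apply pow_le_pow_left₀ (le_of_lt (Real.rpow_pos_of_pos (by positivity) _))
        refine (Real.rpow_le_rpow_left_iff hq1R).mpr ?_
        have := le_abs_self z.im
        linarith
      calc ‖cfun q z * (q:ℂ)^((I*z - 1/2) * (T.nrm x : ℂ)) +
            cfun q (-z) * (q:ℂ)^((-(I*z) - 1/2) * (T.nrm x:ℂ))‖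
          ≤ ‖cfun q z * (q:ℂ)^((I*z - 1/2) * (T.nrm x : ℂ))‖ +
            ‖cfun q (-z) * (q:ℂ)^((-(I*z) - 1/2) * (T.nrm x:ℂ))‖ := htri
        _ = ‖cfun q z‖ * ((q:ℝ)^(-z.im - 1/2 : ℝ))^(T.nrm x) +
            ‖cfun q (-z)‖ * ((q:ℝ)^(z.im - 1/2 : ℝ))^(T.nrm x) := by rw [hA, hB]
        _ ≤ ‖cfun q z‖ * ((q:ℝ)^(-(1/p') : ℝ))^(T.nrm x) +
            ‖cfun q (-z)‖ * ((q:ℝ)^(-(1/p') : ℝ))^(T.nrm x) :=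
            add_le_add (mul_le_mul_of_nonneg_left h1 (norm_nonneg _))
              (mul_le_mul_of_nonneg_left h2 (norm_nonneg _))
        _ = (‖cfun q z‖ + ‖cfun q (-z)‖) *
            ((q:ℝ)^(-(1/p') : ℝ))^(T.nrm x) := by ring

end HomTree
end
end

section
/- Let 1 < p < 2 with 1/p + 1/p′ = 1. There exist constants C₁, C₂ > 0 depending only on p and q such that C₁·q^{−|x|/p′} ≤ |φ_z(x)| ≤ C₂·q^{−|x|/p′} for every x ∈ 𝔛 and every z ∈ ℂ with Im z = δ_{p′} = 1/p′ − 1/2. -/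
open Complex MeasureTheory ENNReal Filter

noncomputable section

namespace HomTree

private lemma algId (sg : ℝ) (hsg : sg ≠ 0) (u : ℂ) (hu : u ≠ 0) :
    Complex.normSq ((sg:ℂ)*u - ((sg:ℂ)*u)⁻¹) - Complex.normSq ((sg:ℂ)*u⁻¹ - ((sg:ℂ)*u⁻¹)⁻¹)
      = sg^2 * Complex.normSq u + 1/(sg^2 * Complex.normSq u)
        - sg^2/(Complex.normSq u) - (Complex.normSq u)/sg^2 := by
  have hR : Complex.normSq u ≠ 0 := fun h => hu (Complex.normSq_eq_zero.mp h)
  have hc : (starRingEnd ℂ) u = (Complex.normSq u : ℂ) / u := by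
    rw [eq_div_iff hu, mul_comm]; exact Complex.mul_conj u
  rw [← Complex.ofReal_inj]
  push_cast
  rw [← Complex.mul_conj, ← Complex.mul_conj]
  simp only [map_sub, map_mul, map_inv₀, Complex.conj_ofReal, hc]
  have hsg' : (sg:ℂ) ≠ 0 := Complex.ofReal_ne_zero.2 hsg
  have hR' : (Complex.normSq u : ℂ) ≠ 0 := Complex.ofReal_ne_zero.2 hR
  have h4 : u^4 * u⁻¹^4 = (1:ℂ) := by
    rw [← mul_pow, mul_inv_cancel₀ hu, one_pow]
  field_simp
  ring

set_option maxHeartbeats 1000000 in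
/-- For `1 < p < 2` and `Im z = δ_{p′} = 1/p′ - 1/2`, `|φ_z(x)| ≍ q^{-|x|/p′}` with constants
depending only on `p` and `q`. -/
theorem statement3 {q : ℕ} (hq : 2 ≤ q) (T : HomTree q) (p p' : ℝ)
    (hp : 1 < p) (hp2 : p < 2) (hconj : 1 / p + 1 / p' = 1) :
    ∃ C₁ C₂ : ℝ, 0 < C₁ ∧ 0 < C₂ ∧ ∀ (x : T.X) (z : ℂ), z.im = 1 / p' - 1 / 2 →
      C₁ * (q : ℝ) ^ (-(T.nrm x : ℝ) / p') ≤ ‖T.sph z x‖ ∧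
        ‖T.sph z x‖ ≤ C₂ * (q : ℝ) ^ (-(T.nrm x : ℝ) / p') := by
  have hQ1 : (1:ℝ) < (q:ℝ) := by exact_mod_cast (show 1 < q by omega)
  set Q : ℝ := (q:ℝ) with hQdef
  have hQ0 : (0:ℝ) < Q := lt_trans one_pos hQ1
  have hp0 : (0:ℝ) < p := lt_trans one_pos hp
  have h1p : 1/p < 1 := by rw [div_lt_one hp0]; exact hp
  have h2p : 1/2 < 1/p := by rw [div_lt_div_iff₀ two_pos hp0]; linarith
  have hip' : 1/p' = 1 - 1/p := by linarith
  have hp'pos0 : 0 < 1/p' := by rw [hip']; linarith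
  have hp'lt : 1/p' < 1/2 := by rw [hip']; linarith
  have hp'pos : 0 < p' := one_div_pos.mp hp'pos0
  set E : ℝ := 1/p' - 1/2 with hEdef
  have hE0 : E < 0 := by simp only [hEdef]; linarith
  have hE1 : -(1/2) < E := by simp only [hEdef]; linarith
  -- basic constants
  set sg : ℝ := Q ^ ((1:ℝ)/2) with hsgdef
  have hsg0 : 0 < sg := Real.rpow_pos_of_pos hQ0 _
  have hsgsq : sg^2 = Q := by
    rw [hsgdef, ← Real.rpow_natCast (Q ^ ((1:ℝ)/2)) 2, ← Real.rpow_mul hQ0.le]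
    norm_num
  set ν : ℝ := Q ^ (-E) with hνdef
  have hν1 : 1 < ν := by
    rw [hνdef]
    calc (1:ℝ) = Q ^ (0:ℝ) := (Real.rpow_zero Q).symm
    _ < Q ^ (-E) := by rw [Real.rpow_lt_rpow_left_iff hQ1]; linarith
  have hν0 : 0 < ν := lt_trans one_pos hν1
  set R₀ : ℝ := Q ^ (-(2*E)) with hR₀def
  have hR₀1 : 1 < R₀ := by
    rw [hR₀def]
    calc (1:ℝ) = Q ^ (0:ℝ) := (Real.rpow_zero Q).symm
    _ < Q ^ (-(2*E)) := by rw [Real.rpow_lt_rpow_left_iff hQ1]; linarith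
  have hR₀0 : 0 < R₀ := lt_trans one_pos hR₀1
  set D₀ : ℝ := Q * R₀ + 1/(Q * R₀) - Q/R₀ - R₀/Q with hD₀def
  have hD₀pos : 0 < D₀ := by
    have : D₀ = (Q - 1/Q) * (R₀ - 1/R₀) := by
      rw [hD₀def]; field_simp; ring
    rw [this]
    apply _root_.mul_pos
    · have : 1/Q < 1 := by rw [div_lt_one hQ0]; exact hQ1
      linarith
    · have : 1/R₀ < 1 := by rw [div_lt_one hR₀0]; exact hR₀1
      linarith
  set M₁ : ℝ := sg * ν + (sg * ν)⁻¹ with hM₁def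
  set M₂ : ℝ := sg * ν⁻¹ + (sg * ν⁻¹)⁻¹ with hM₂def
  have hM₁0 : 0 < M₁ := by positivity
  have hM₂0 : 0 < M₂ := by positivity
  set dlo : ℝ := ν - ν⁻¹ with hdlodef
  set dhi : ℝ := ν + ν⁻¹ with hdhidef
  have hdlo0 : 0 < dlo := by
    rw [hdlodef]
    have : ν⁻¹ < 1 := inv_lt_one_of_one_lt₀ hν1
    linarith
  have hdhi0 : 0 < dhi := by positivity
  set K : ℝ := sg / (Q + 1) with hKdef
  have hK0 : 0 < K := by positivity
  refine ⟨K * (D₀/(M₁+M₂)/dhi), K * (M₁/dlo) + K * (M₂/dlo), by positivity, by positivity, ?_⟩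
  intro x z hz
  set n : ℕ := T.nrm x with hndef
  have hn0 : (0:ℝ) ≤ (n:ℝ) := Nat.cast_nonneg n
  have hzE : z.im = E := hz
  have hzne : z.im ≠ 0 := by rw [hzE]; exact ne_of_lt hE0
  -- kill the exceptional branches of sph
  have hnot1 : ¬ ∃ k : ℤ, z = (k:ℂ) * ((tau q : ℝ):ℂ) := by
    rintro ⟨k, hk⟩
    apply hzne
    rw [hk]
    simp [Complex.mul_im]
  have hnot2 : ¬ ∃ k : ℤ, z = ((tau q : ℝ):ℂ)/2 + (k:ℂ) * ((tau q : ℝ):ℂ) := by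
    rintro ⟨k, hk⟩
    apply hzne
    rw [hk]
    simp [Complex.add_im, Complex.mul_im, Complex.div_im]
  have hsph : T.sph z x = cfun q z * (q:ℂ)^((I*z - 1/2)*(n:ℂ))
      + cfun q (-z) * (q:ℂ)^((-(I*z) - 1/2)*(n:ℂ)) := by
    rw [sph, if_neg hnot1, if_neg hnot2]
  -- the u, s decomposition
  have hq0 : (q:ℂ) ≠ 0 := Nat.cast_ne_zero.2 (by omega)
  have hbase : (q:ℂ) = ((Q:ℝ):ℂ) := by rw [hQdef]; push_cast; rfl
  have habs : ∀ w : ℂ, ‖(q:ℂ)^w‖ = Q ^ w.re := by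
    intro w; rw [hbase]; exact Complex.norm_cpow_eq_rpow_re_of_pos hQ0 w
  set u : ℂ := (q:ℂ) ^ (I*z) with hudef
  have habsu : ‖u‖ = ν := by
    rw [hudef, habs, hνdef]
    congr 1
    simp [Complex.mul_re, hzE]
  have habsuinv : ‖u⁻¹‖ = ν⁻¹ := by rw [norm_inv, habsu]
  have hune : u ≠ 0 := by
    intro h
    rw [h, norm_zero] at habsu
    exact absurd habsu.symm (ne_of_gt hν0)
  have hs : (q:ℂ) ^ ((1:ℂ)/2) = ((sg:ℝ):ℂ) := by
    rw [hbase, hsgdef, Complex.ofReal_cpow hQ0.le]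
    norm_num
  have h12 : ∀ w : ℂ, (q:ℂ)^((1:ℂ)/2 + w) = ((sg:ℝ):ℂ) * (q:ℂ)^w := by
    intro w; rw [Complex.cpow_add _ _ hq0, hs]
  have hneg : ∀ w : ℂ, (q:ℂ)^(-(1:ℂ)/2 - w) = (((sg:ℝ):ℂ) * (q:ℂ)^w)⁻¹ := by
    intro w
    rw [show -(1:ℂ)/2 - w = -((1:ℂ)/2 + w) by ring, Complex.cpow_neg, h12]
  set N₁ : ℂ := (sg:ℂ)*u - ((sg:ℂ)*u)⁻¹ with hN₁def
  set N₂ : ℂ := (sg:ℂ)*u⁻¹ - ((sg:ℂ)*u⁻¹)⁻¹ with hN₂def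
  set d : ℂ := u - u⁻¹ with hddef
  have hIneg : I * (-z) = -(I*z) := by ring
  have hcz : cfun q z = (sg:ℂ)/((q:ℂ)+1) * (N₁ / d) := by
    rw [cfun, h12 (I*z), hneg (I*z), Complex.cpow_neg, hs]
  have hcnz : cfun q (-z) = (sg:ℂ)/((q:ℂ)+1) * (N₂ / (-d)) := by
    rw [cfun, hIneg, h12 (-(I*z)), hneg (-(I*z)), Complex.cpow_neg, neg_neg, hs]
    rw [← hudef, hN₂def, hddef]
    ring
  -- abs of the pieces
  have habsq1 : ‖(q:ℂ)+1‖ = Q + 1 := by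
    rw [show (q:ℂ)+1 = ((Q+1 : ℝ):ℂ) by rw [hbase]; push_cast; ring]
    rw [Complex.norm_of_nonneg (by linarith)]
  have habssg : ‖((sg:ℝ):ℂ)‖ = sg := by
    rw [Complex.norm_of_nonneg hsg0.le]
  set a : ℝ := ‖N₁‖ with hadef
  set b : ℝ := ‖N₂‖ with hbdef
  set dd : ℝ := ‖d‖ with hdddef
  have ha0 : 0 ≤ a := norm_nonneg _
  have hb0 : 0 ≤ b := norm_nonneg _
  have ha_le : a ≤ M₁ := by
    rw [hadef, hN₁def, hM₁def]
    refine le_trans (norm_sub_le _ _) ?_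
    rw [norm_inv, norm_mul, habssg, habsu]
  have hb_le : b ≤ M₂ := by
    rw [hbdef, hN₂def, hM₂def]
    refine le_trans (norm_sub_le _ _) ?_
    rw [norm_inv, norm_mul, habssg, habsuinv]
  have hdd_lo : dlo ≤ dd := by
    rw [hdddef, hddef, hdlodef, ← habsuinv, ← habsu]
    exact norm_sub_norm_le _ _
  have hdd0 : 0 < dd := lt_of_lt_of_le hdlo0 hdd_lo
  have hdd_hi : dd ≤ dhi := by
    rw [hdddef, hddef, hdhidef, ← habsuinv, ← habsu]
    exact norm_sub_le _ _
  -- the key identity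
  have hnsq : Complex.normSq u = R₀ := by
    rw [← Complex.sq_norm, habsu, hνdef, hR₀def, sq, ← Real.rpow_add hQ0]
    congr 1
    ring
  have hab : a^2 - b^2 = D₀ := by
    rw [hadef, hbdef, Complex.sq_norm, Complex.sq_norm, hN₁def, hN₂def,
      algId sg (ne_of_gt hsg0) u hune, hnsq, hsgsq, hD₀def]
  have hba : b < a := by
    have hsq : b^2 < a^2 := by linarith [hD₀pos, hab]
    exact lt_of_pow_lt_pow_left₀ 2 ha0 hsq
  have hab_diff : D₀/(M₁+M₂) ≤ a - b := by
    rw [div_le_iff₀ (by positivity)]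
    have hfact : (a-b)*(a+b) = a^2 - b^2 := by ring
    have h1 : D₀ = (a-b)*(a+b) := by linarith [hab, hfact]
    have h2 : (a-b)*(a+b) ≤ (a-b)*(M₁+M₂) :=
      mul_le_mul_of_nonneg_left (by linarith [ha_le, hb_le]) (by linarith [hba])
    linarith
  -- abs of cfun
  have hcabs : ‖cfun q z‖ = K * (a/dd) := by
    rw [hcz, norm_mul, norm_div, norm_div, habssg, habsq1, hKdef, hadef, hdddef]
  have hcnabs : ‖cfun q (-z)‖ = K * (b/dd) := by
    rw [hcnz, norm_mul, norm_div, norm_div, habssg, habsq1, norm_neg, hKdef, hbdef, hdddef]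
  -- abs of the powers
  set X : ℝ := Q ^ (-(n:ℝ)/p') with hXdef
  have hX0 : 0 < X := Real.rpow_pos_of_pos hQ0 _
  have hA_abs : ‖(q:ℂ)^((I*z - 1/2)*(n:ℂ))‖ = X := by
    rw [habs, hXdef]
    congr 1
    simp only [Complex.mul_re, Complex.sub_re, Complex.sub_im, Complex.mul_im,
      Complex.I_re, Complex.I_im, Complex.natCast_re, Complex.natCast_im]
    rw [hzE]
    norm_num
    rw [hEdef]
    field_simp
    ring
  set Y : ℝ := Q ^ ((E - 1/2)*(n:ℝ)) with hYdef
  have hY0 : 0 < Y := Real.rpow_pos_of_pos hQ0 _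
  have hB_abs : ‖(q:ℂ)^((-(I*z) - 1/2)*(n:ℂ))‖ = Y := by
    rw [habs, hYdef]
    congr 1
    simp only [Complex.mul_re, Complex.sub_re, Complex.sub_im, Complex.mul_im, Complex.neg_re,
      Complex.neg_im, Complex.I_re, Complex.I_im, Complex.natCast_re, Complex.natCast_im]
    rw [hzE]
    norm_num
  have hYX : Y ≤ X := by
    rw [hYdef, hXdef, Real.rpow_le_rpow_left_iff hQ1]
    have h2 : (n:ℝ) * (1/p') ≤ (n:ℝ) * (1/2) := mul_le_mul_of_nonneg_left (le_of_lt hp'lt) hn0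
    have h3 : (E - 1/2) * (n:ℝ) = (n:ℝ)*(1/p') - (n:ℝ) := by rw [hEdef]; ring
    have h4 : -(n:ℝ)/p' = -((n:ℝ)*(1/p')) := by ring
    rw [h3, h4]
    linarith
  -- assemble
  rw [hsph]
  have ht1 : ‖cfun q z * (q:ℂ)^((I*z - 1/2)*(n:ℂ))‖ = K * (a/dd) * X := by
    rw [norm_mul, hcabs, hA_abs]
  have ht2 : ‖cfun q (-z) * (q:ℂ)^((-(I*z) - 1/2)*(n:ℂ))‖ = K * (b/dd) * Y := by
    rw [norm_mul, hcnabs, hB_abs]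
  set t1 : ℂ := cfun q z * (q:ℂ)^((I*z - 1/2)*(n:ℂ)) with ht1def
  set t2 : ℂ := cfun q (-z) * (q:ℂ)^((-(I*z) - 1/2)*(n:ℂ)) with ht2def
  have htri_lo : ‖t1‖ - ‖t2‖ ≤ ‖t1 + t2‖ := by
    have h := norm_sub_norm_le t1 (-t2)
    simpa using h
  have htri_hi : ‖t1 + t2‖ ≤ ‖t1‖ + ‖t2‖ :=
    norm_add_le _ _
  rw [ht1, ht2] at htri_lo htri_hi
  constructor
  · -- lower bound
    have h1 : D₀/(M₁+M₂)/dhi ≤ (a-b)/dd :=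
      div_le_div₀ (by linarith) hab_diff hdd0 hdd_hi
    have h2 : K * (D₀/(M₁+M₂)/dhi) * X ≤ K * ((a-b)/dd) * X := by
      apply mul_le_mul_of_nonneg_right _ (le_of_lt hX0)
      exact mul_le_mul_of_nonneg_left h1 (le_of_lt hK0)
    refine le_trans h2 ?_
    have h3 : K * (b/dd) * Y ≤ K * (b/dd) * X :=
      mul_le_mul_of_nonneg_left hYX (by positivity)
    have h4 : K * ((a-b)/dd) * X = K * (a/dd) * X - K * (b/dd) * X := by ring
    linarith
  · -- upper bound
    have h5 : a/dd ≤ M₁/dlo := div_le_div₀ (le_of_lt hM₁0) ha_le hdlo0 hdd_lo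
    have h6 : b/dd ≤ M₂/dlo := div_le_div₀ (le_of_lt hM₂0) hb_le hdlo0 hdd_lo
    have h7 : K * (a/dd) * X ≤ K * (M₁/dlo) * X := by
      apply mul_le_mul_of_nonneg_right _ (le_of_lt hX0)
      exact mul_le_mul_of_nonneg_left h5 (le_of_lt hK0)
    have h8 : K * (b/dd) * Y ≤ K * (M₂/dlo) * X := by
      refine le_trans (mul_le_mul_of_nonneg_left hYX (by positivity)) ?_
      apply mul_le_mul_of_nonneg_right _ (le_of_lt hX0)
      exact mul_le_mul_of_nonneg_left h6 (le_of_lt hK0)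
    have h9 : (K * (M₁/dlo) + K * (M₂/dlo)) * X = K * (M₁/dlo) * X + K * (M₂/dlo) * X := by ring
    linarith


end HomTree
end
end
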